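/- arXiv:1402.5201 — 2 statements merged into one kernel-verified Lean document; each statement's English description precedes it below -/
import Mathlib

section
/- Let G be a group, τ an automorphism of G of finite order r, and (V, ρ) a finite-dimensional representation of G over a field k, viewed as a k[G]-module. Then the twisted exponent exp_τ(V) equals the least common multiple over g ∈ G of the orders of the linear operators ρ(N(g)), where N(g) = g·τ(g)·τ²(g)⋯τ^{r-1}(g). -/
open scoped TensorProduct

noncomputable section

namespace TwistedExponent

variable (k H : Type*) [CommRing k] [Ring H] [HopfAlgebra k H]

/-- The convolution product of two linear endomorphisms of a bialgebra:
`f * g = μ ∘ (f ⊗ g) ∘ Δ`. -/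
def conv (f g : H →ₗ[k] H) : H →ₗ[k] H :=
  LinearMap.mul' k H ∘ₗ TensorProduct.map f g ∘ₗ Coalgebra.comul

/-- The convolution unit `η ∘ ε`, i.e. `h ↦ ε(h)·1`. -/
def convOne : H →ₗ[k] H := Algebra.linearMap k H ∘ₗ Coalgebra.counit

/-- `gamma T m` is the map `Γ_m = μ^m ∘ (Id ⊗ T ⊗ T² ⊗ ⋯ ⊗ T^{m-1}) ∘ Δ^{m-1}`, expressed as
the convolution product `Id * T * T² * ⋯ * T^{m-1}` (with `gamma T 0` the convolution unit). -/
def gamma (T : H →ₗ[k] H) : ℕ → (H →ₗ[k] H)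
  | 0 => convOne k H
  | (m + 1) => conv k H (gamma T m) (T ^ m)

/-- The inverse of the antipode, given that the antipode is bijective. -/
def antipodeInv (hS : Function.Bijective (HopfAlgebra.antipode (R := k) (A := H))) :
    H →ₗ[k] H :=
  (LinearEquiv.ofBijective (HopfAlgebra.antipode (R := k) (A := H)) hS).symm

/-- The map `S⁻² ∘ τ`. -/
def twist (hS : Function.Bijective (HopfAlgebra.antipode (R := k) (A := H)))
    (τ : H →ₗ[k] H) : H →ₗ[k] H :=
  antipodeInv k H hS ∘ₗ antipodeInv k H hS ∘ₗ τ

/-- `f : H → H` has exact (finite) order `r`. -/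
def HasOrder (τ : H → H) (r : ℕ) : Prop :=
  0 < r ∧ τ^[r] = id ∧ ∀ s : ℕ, 0 < s → s < r → τ^[s] ≠ id

end TwistedExponent

open TwistedExponent

namespace TwistedExponent

/-- The norm of `g ∈ G` with respect to `τ`: `N(g) = g·τ(g)·τ²(g)⋯τ^{r-1}(g)`. -/
def normG {G : Type*} [Monoid G] (τ : G → G) (r : ℕ) (g : G) : G :=
  ((List.range r).map (fun i => τ^[i] g)).prod

/-- `f : G → G` has exact (finite) order `r`. -/
def HasOrderG {G : Type*} (τ : G → G) (r : ℕ) : Prop :=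
  0 < r ∧ τ^[r] = id ∧ ∀ s : ℕ, 0 < s → s < r → τ^[s] ≠ id

/-- The map `Γ_m` acts on the `H`-module `V` as `ε·Id_V`. -/
def GammaTrivOn {k H : Type*} [CommRing k] [Ring H] [HopfAlgebra k H] (T : H →ₗ[k] H) (m : ℕ)
    (V : Type*) [AddCommGroup V] [Module k V] [Module H V] [IsScalarTower k H V] : Prop :=
  ∀ (h : H) (v : V), gamma k H T m h • v = Coalgebra.counit (R := k) h • v

end TwistedExponent

/-!
On a group-like element `ι g` the antipode acts as inversion, so `S⁻²τ` acts as `τ` and, since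
`Δ(ι g) = ι g ⊗ ι g`, the convolution product `Γ^τ_m` sends `ι g` to `ι (g·τ(g)⋯τ^{m-1}(g))`.
When `τ^r = id` this is `ι (N(g) ^ n)` for `m = n r`. As the `ι g` span `k[G]` and `ε(ι g) = 1`,
`Γ^τ_{nr}` acts as `ε · Id_V` exactly when every `ρ(N(g))^n` is the identity, so the two
defining conditions of the exponents agree for every `n`.
-/

namespace TwistedExponent

section Norm

variable {G : Type*} [Monoid G]

lemma normG_add (σ : G → G) (m n : ℕ) (g : G) :
    normG σ (m + n) g = normG σ m g * normG σ n (σ^[m] g) := by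
  simp only [normG, List.range_add, List.map_append, List.prod_append, List.map_map]
  congr 2
  refine List.map_congr_left fun i _ => ?_
  rw [Function.comp_apply, Nat.add_comm, Function.iterate_add_apply]

lemma normG_mul_eq_pow {σ : G → G} {r : ℕ} (hσ : σ^[r] = id) (n : ℕ) (g : G) :
    normG σ (n * r) g = normG σ r g ^ n := by
  induction n with
  | zero => simp [normG]
  | succ n ih =>
    have hnr : σ^[n * r] = id := by
      rw [Nat.mul_comm, Function.iterate_mul, hσ, Function.iterate_id]
    rw [Nat.succ_mul, normG_add, ih, pow_succ, hnr, id_eq]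

end Norm

lemma pow_apply_of_apply_eq {k M α : Type*} [CommSemiring k] [AddCommMonoid M] [Module k M]
    {T : M →ₗ[k] M} {ι : α → M} {σ : α → α} (hT : ∀ a, T (ι a) = ι (σ a)) (i : ℕ) (a : α) :
    (T ^ i) (ι a) = ι (σ^[i] a) := by
  induction i generalizing a with
  | zero => rfl
  | succ i ih => rw [pow_succ, Module.End.mul_apply, hT, ih, Function.iterate_succ_apply]

section Hopf

variable {k H G : Type*} [CommRing k] [Ring H] [HopfAlgebra k H] [Group G] {ι : G →* H}

lemma conv_apply_of_isGroupLikeElem (f f' : H →ₗ[k] H) {x : H} (hx : IsGroupLikeElem k x) :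
    conv k H f f' x = f x * f' x := by
  simp [conv, hx.comul_eq_tmul_self]

lemma antipode_apply_map (hι : ∀ g, IsGroupLikeElem k (ι g)) (g : G) :
    HopfAlgebra.antipode k (ι g) = ι g⁻¹ :=
  left_inv_eq_right_inv (hι g).antipode_mul_cancel (by rw [← map_mul, mul_inv_cancel, map_one])

lemma antipodeInv_apply_map (hι : ∀ g, IsGroupLikeElem k (ι g))
    (hS : Function.Bijective (HopfAlgebra.antipode (R := k) (A := H)))
    (g : G) : antipodeInv k H hS (ι g) = ι g⁻¹ := by
  apply hS.injective
  rw [antipode_apply_map hι, inv_inv]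
  exact (LinearEquiv.ofBijective _ hS).apply_symm_apply (ι g)

lemma twist_apply_map (hι : ∀ g, IsGroupLikeElem k (ι g))
    (hS : Function.Bijective (HopfAlgebra.antipode (R := k) (A := H)))
    {f : H →ₗ[k] H} {σ : G → G} (hf : ∀ g, f (ι g) = ι (σ g)) (g : G) :
    twist k H hS f (ι g) = ι (σ g) := by
  simp only [twist, LinearMap.comp_apply, hf, antipodeInv_apply_map hι, inv_inv]

lemma gamma_apply_map (hι : ∀ g, IsGroupLikeElem k (ι g)) {T : H →ₗ[k] H} {σ : G → G}
    (hT : ∀ g, T (ι g) = ι (σ g)) (m : ℕ) (g : G) :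
    gamma k H T m (ι g) = ι (normG σ m g) := by
  induction m with
  | zero => simp [gamma, convOne, normG, (hι g).counit_eq_one]
  | succ m ih =>
    rw [gamma, conv_apply_of_isGroupLikeElem _ _ (hι g), ih, pow_apply_of_apply_eq hT,
      ← map_mul, normG_add]
    simp [normG]

lemma gammaTrivOn_iff (hι : ∀ g, IsGroupLikeElem k (ι g))
    (hspan : Submodule.span k (Set.range ι) = ⊤) {T : H →ₗ[k] H}
    {σ : G → G} (hT : ∀ g, T (ι g) = ι (σ g)) (m : ℕ)
    (V : Type*) [AddCommGroup V] [Module k V] [Module H V] [IsScalarTower k H V] :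
    GammaTrivOn T m V ↔ ∀ (g : G) (v : V), ι (normG σ m g) • v = v := by
  refine ⟨fun hΓ g v => ?_, fun hN h v => ?_⟩
  · simpa [gamma_apply_map hι hT, (hι g).counit_eq_one] using hΓ (ι g) v
  · have hext : (LinearMap.toSpanSingleton H V v).restrictScalars k ∘ₗ gamma k H T m =
        LinearMap.toSpanSingleton k V v ∘ₗ Coalgebra.counit :=
      LinearMap.ext_on_range hspan fun g => by
        simp [gamma_apply_map hι hT, (hι g).counit_eq_one, hN g v]
    simpa using LinearMap.congr_fun hext h

end Hopf

end TwistedExponent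

theorem stmt2_general {k G H : Type*} [Field k] [Group G] [Ring H] [HopfAlgebra k H]
    (hS : Function.Bijective (HopfAlgebra.antipode (R := k) (A := H)))
    (ι : G →* H) (b : Module.Basis G k H) (hb : ∀ g : G, b g = ι g)
    (hgl₁ : ∀ g : G, Coalgebra.comul (R := k) (ι g) = ι g ⊗ₜ[k] ι g)
    (hgl₂ : ∀ g : G, Coalgebra.counit (R := k) (ι g) = 1)
    (τ : G ≃* G) (r : ℕ) (hr : HasOrderG (⇑τ) r)
    (τH : H ≃ₐc[k] H) (hτH : ∀ g : G, τH (ι g) = ι (τ g))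
    (V : Type*) [AddCommGroup V] [Module k V] [Module H V] [IsScalarTower k H V] :
    ∀ e : ℕ,
      IsLeast {n : ℕ | 0 < n ∧
        GammaTrivOn (twist k H hS (τH : H →ₗ[k] H)) (n * r) V} e ↔
      IsLeast {n : ℕ | 0 < n ∧ ∀ (g : G) (v : V), ι (normG (⇑τ) r g) ^ n • v = v} e := by
  have hι : ∀ g, IsGroupLikeElem k (ι g) := fun g => ⟨hgl₂ g, hgl₁ g⟩
  have hspan : Submodule.span k (Set.range ι) = ⊤ := by
    rw [← b.span_eq, show ⇑b = ι from funext hb]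
  have hT := twist_apply_map hι hS (f := (τH : H →ₗ[k] H)) hτH
  intro e
  simp only [gammaTrivOn_iff hι hspan hT, normG_mul_eq_pow hr.2.1, map_pow]

/-- Let `G` be a group, `τ` an automorphism of `G` of finite order `r`, and
`(V, ρ)` a finite-dimensional representation of `G` over a field `k`, viewed as a module over
the group algebra `k[G]` (encoded as a Hopf algebra `H` with a monoid homomorphism `ι : G →* H`
whose values are group-like and form a `k`-basis, `τH` being the linear extension of `τ`).
Then `exp_τ(V)` equals the least common multiple over `g ∈ G` of the orders of the linear
operators `ρ(N(g))`, where `N(g) = g·τ(g)⋯τ^{r-1}(g)`: the least positive `n` with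
`ρ(Γ^τ_{nr}(h)) = ε(h)·Id_V` for all `h` is exactly the least positive `n` with
`ρ(N(g))^n = Id_V` for all `g ∈ G` (both possibly nonexistent). -/
theorem stmt2 {k G H : Type*} [Field k] [Group G] [Ring H] [HopfAlgebra k H]
    (hS : Function.Bijective (HopfAlgebra.antipode (R := k) (A := H)))
    (ι : G →* H) (b : Module.Basis G k H) (hb : ∀ g : G, b g = ι g)
    (hgl₁ : ∀ g : G, Coalgebra.comul (R := k) (ι g) = ι g ⊗ₜ[k] ι g)
    (hgl₂ : ∀ g : G, Coalgebra.counit (R := k) (ι g) = 1)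
    (τ : G ≃* G) (r : ℕ) (hr : HasOrderG (⇑τ) r)
    (τH : H ≃ₐc[k] H) (hτH : ∀ g : G, τH (ι g) = ι (τ g))
    (V : Type*) [AddCommGroup V] [Module k V] [Module H V] [IsScalarTower k H V]
    [FiniteDimensional k V] :
    ∀ e : ℕ,
      IsLeast {n : ℕ | 0 < n ∧
        GammaTrivOn (twist k H hS (τH : H →ₗ[k] H)) (n * r) V} e ↔
      IsLeast {n : ℕ | 0 < n ∧ ∀ (g : G) (v : V), ι (normG (⇑τ) r g) ^ n • v = v} e :=
  stmt2_general hS ι b hb hgl₁ hgl₂ τ r hr τH hτH V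
end
end

section
/- Let H and H' be Hopf algebras over a field k with bijective antipodes, τ a Hopf algebra automorphism of H of finite order r, and φ : H → H' a surjective Hopf algebra homomorphism with τ(ker φ) = ker φ. Let τ' be the induced Hopf algebra automorphism of H' defined by τ'(φ(h)) = φ(τ(h)), and let r' be the order of τ'. Then exp_{τ'}(H') divides exp_τ(H)·(r/r'). -/
open scoped TensorProduct

noncomputable section

open TwistedExponent

/-!
The twist `T = S⁻²τ` is a coalgebra automorphism (`S²` is one because `S` is an
anti-coalgebra map), so in the convolution algebra `Γ_{a+b} = Γ_a * (Γ_b ∘ T^a)`. Hence once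
`Γ_a` is trivial, `Γ_{a+b}` is trivial iff `Γ_b` is, and the `n` with `Γ'_{n r'}` trivial are
exactly the multiples of `exp_{τ'}(H')`. A bialgebra map `φ` intertwines the antipodes, hence
`S⁻²τ` with `S'⁻²τ'`, so `φ ∘ Γ_m = Γ'_m ∘ φ`; as `φ` is onto, `Γ'_{e r}` is trivial, and
`e r = e (r / r') r'` because `τ'^r = id` forces `r' ∣ r`.
-/

open Coalgebra TensorProduct WithConv

namespace HopfAlgebra

section Antipode

variable {k H : Type*} [CommRing k] [Ring H] [HopfAlgebra k H]

lemma algHom_comp_antipode_mul_self {A : Type*} [Ring A] [Algebra k A] (g : H →ₐ[k] A) :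
    toConv (g.toLinearMap ∘ₗ antipode k) * toConv g.toLinearMap = 1 := by
  have := LinearMap.algHom_comp_convMul_distrib g (toConv (antipode k)) (toConv .id)
  rw [LinearMap.antipode_mul_id] at this
  refine congr(toConv $this).symm.trans ?_
  ext
  simp

lemma self_mul_algHom_comp_antipode {A : Type*} [Ring A] [Algebra k A] (g : H →ₐ[k] A) :
    toConv g.toLinearMap * toConv (g.toLinearMap ∘ₗ antipode k) = 1 := by
  have := LinearMap.algHom_comp_convMul_distrib g (toConv .id) (toConv (antipode k))
  rw [LinearMap.id_mul_antipode] at this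
  refine congr(toConv $this).symm.trans ?_
  ext
  simp

lemma antipode_comp_coalgHom_mul_self {C : Type*} [AddCommGroup C] [Module k C] [Coalgebra k C]
    (g : C →ₗc[k] H) : toConv (antipode k ∘ₗ g.toLinearMap) * toConv g.toLinearMap = 1 := by
  have := LinearMap.convMul_comp_coalgHom_distrib (toConv (antipode k)) (toConv .id) g
  rw [LinearMap.antipode_mul_id] at this
  refine congr(toConv $this).symm.trans ?_
  ext
  simp

-- Sweedler: `∑ S(a₁) a₂ ⊗ a₃ = 1 ⊗ a`.
lemma includeLeft_comp_antipode_mul_comul :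
    toConv ((Algebra.TensorProduct.includeLeft : H →ₐ[k] H ⊗[k] H).toLinearMap ∘ₗ antipode k) *
      toConv (comul : H →ₗ[k] H ⊗[k] H) =
      toConv (Algebra.TensorProduct.includeRight : H →ₐ[k] H ⊗[k] H).toLinearMap := by
  ext a
  set 𝓡 := ℛ k a
  have hcoassoc := congr(map (LinearMap.mul' k H ∘ₗ map (antipode k) .id) .id
    ((TensorProduct.assoc k H H H).symm
      $(sum_tmul_tmul_eq 𝓡 (fun i => ℛ k (𝓡.left i)) (fun i => ℛ k (𝓡.right i)))))
  simp only [map_sum, TensorProduct.assoc_symm_tmul, TensorProduct.map_tmul,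
    LinearMap.comp_apply, LinearMap.mul'_apply, LinearMap.id_apply] at hcoassoc
  rw [𝓡.convMul_apply]
  calc _ = ∑ i ∈ 𝓡.index, ∑ j ∈ (ℛ k (𝓡.right i)).index,
        (antipode k (𝓡.left i) * (ℛ k (𝓡.right i)).left j) ⊗ₜ[k] (ℛ k (𝓡.right i)).right j := by
        simp [← (ℛ k (𝓡.right _)).eq, Finset.mul_sum]
    _ = _ := hcoassoc.symm
    _ = 1 ⊗ₜ[k] a := by
        simp only [← sum_tmul, sum_antipode_mul_eq_algebraMap_counit,
          Algebra.algebraMap_eq_smul_one, smul_tmul, ← tmul_sum, sum_counit_smul]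

-- Sweedler: `S(a₂) ⊗ S(a₁) = (1 ⊗ S(a₁)) (S(a₂) ⊗ 1)`.
lemma map_antipode_comp_comm_comp_comul :
    toConv (map (antipode k) (antipode k) ∘ₗ (TensorProduct.comm k H H).toLinearMap ∘ₗ comul) =
      toConv ((Algebra.TensorProduct.includeRight : H →ₐ[k] H ⊗[k] H).toLinearMap ∘ₗ
        antipode k) *
      toConv ((Algebra.TensorProduct.includeLeft : H →ₐ[k] H ⊗[k] H).toLinearMap ∘ₗ
        antipode k) := by
  ext a
  rw [(ℛ k a).convMul_apply]
  simp [← (ℛ k a).eq, map_sum]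

-- Both sides are convolution inverses of `comul`, on the right and on the left respectively.
lemma comul_comp_antipode :
    comul ∘ₗ antipode k =
      map (antipode k) (antipode k) ∘ₗ (TensorProduct.comm k H H).toLinearMap ∘ₗ
        (comul : H →ₗ[k] H ⊗[k] H) := by
  have hleft : toConv (map (antipode k) (antipode k) ∘ₗ
      (TensorProduct.comm k H H).toLinearMap ∘ₗ comul) * toConv (comul : H →ₗ[k] H ⊗[k] H) = 1 := by
    rw [map_antipode_comp_comm_comp_comul, mul_assoc, includeLeft_comp_antipode_mul_comul,
      algHom_comp_antipode_mul_self]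
  exact congr(ofConv $(left_inv_eq_right_inv hleft LinearMap.comul_right_inv)).symm

variable (k H) in
def antipodeSqCoalgHom : H →ₗc[k] H where
  toLinearMap := antipode k ∘ₗ antipode k
  counit_comp := by rw [← LinearMap.comp_assoc, counit_comp_antipode, counit_comp_antipode]
  map_comp_comul := by
    rw [← LinearMap.comp_assoc, comul_comp_antipode, LinearMap.comp_assoc, LinearMap.comp_assoc,
      comul_comp_antipode]
    simp only [← LinearMap.comp_assoc]
    congr 1
    ext x y
    simp

end Antipode

lemma antipode_comp_bialgHom {k H H' : Type*} [CommRing k] [Ring H] [HopfAlgebra k H] [Ring H']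
    [HopfAlgebra k H'] (φ : H →ₐc[k] H') :
    antipode k ∘ₗ φ.toLinearMap = φ.toLinearMap ∘ₗ antipode k :=
  congr(ofConv $(left_inv_eq_right_inv (antipode_comp_coalgHom_mul_self (φ : H →ₗc[k] H'))
    (self_mul_algHom_comp_antipode (φ : H →ₐ[k] H'))))

end HopfAlgebra

open HopfAlgebra

lemma CoalgHom.toLinearMap_pow {k C : Type*} [CommRing k] [AddCommGroup C] [Module k C]
    [Coalgebra k C] (T : C →ₗc[k] C) (n : ℕ) : (T ^ n).toLinearMap = T.toLinearMap ^ n := by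
  induction n with
  | zero => rfl
  | succ n ih => rw [pow_succ, pow_succ, ← ih]; rfl

lemma Nat.exists_isLeast_dvd_of_add_iff {P : ℕ → Prop} (hP : ∀ a b, P a → (P (a + b) ↔ P b))
    {N : ℕ} (hN0 : 0 < N) (hN : P N) : ∃ e, IsLeast {n | 0 < n ∧ P n} e ∧ e ∣ N := by
  set e := sInf {n | 0 < n ∧ P n}
  have he : IsLeast {n | 0 < n ∧ P n} e := isLeast_csInf ⟨N, hN0, hN⟩
  refine ⟨e, he, ?_⟩
  have hmul : ∀ q, P (e * q) := by
    intro q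
    induction q with
    | zero => exact (hP e 0 he.1.2).1 he.1.2
    | succ q ih => rw [Nat.mul_succ, Nat.add_comm]; exact (hP e _ he.1.2).2 ih
  have hmod : P (N % e) := by
    rw [← hP _ _ (hmul (N / e)), Nat.div_add_mod]
    exact hN
  by_contra h
  exact absurd (he.2 ⟨Nat.pos_of_ne_zero (mt Nat.dvd_of_mod_eq_zero h), hmod⟩)
    (not_le.2 (Nat.mod_lt _ he.1.1))

namespace TwistedExponent

lemma HasOrder.dvd_of_iterate_eq_id {H : Type*} {f : H → H} {r n : ℕ}
    (hf : HasOrder H f r) (hn : f^[n] = id) : r ∣ n := by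
  obtain ⟨hr, hfr, hmin⟩ := hf
  by_contra h
  have hmod : f^[n % r] = id := by
    have := Function.iterate_add f (n % r) (r * (n / r))
    rw [Nat.mod_add_div, hn, Function.iterate_mul, hfr, Function.iterate_id,
      Function.comp_id] at this
    exact this.symm
  exact hmin _ (Nat.pos_of_ne_zero (mt Nat.dvd_of_mod_eq_zero h)) (Nat.mod_lt _ hr) hmod

section Twist

variable {k H : Type*} [CommRing k] [Ring H] [HopfAlgebra k H]
  (hS : Function.Bijective (antipode k (A := H)))

@[simp]
lemma antipode_antipodeInv (x : H) : antipode k (antipodeInv k H hS x) = x :=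
  (LinearEquiv.ofBijective _ hS).apply_symm_apply x

def antipodeSqEquiv : H ≃ₗc[k] H :=
  CoalgEquiv.ofBijective (f := antipodeSqCoalgHom k H) (hS.comp hS)

def twistEquiv (τ : H ≃ₗc[k] H) : H ≃ₗc[k] H :=
  τ.trans (antipodeSqEquiv hS).symm

lemma toLinearMap_twistEquiv (τ : H ≃ₗc[k] H) :
    (twistEquiv hS τ).toCoalgHom.toLinearMap = twist k H hS τ.toLinearEquiv.toLinearMap := by
  ext x
  apply (antipodeSqEquiv hS).injective
  simp [twistEquiv, twist, antipodeSqEquiv, antipodeSqCoalgHom]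

variable {H' : Type*} [Ring H'] [HopfAlgebra k H'] (hS' : Function.Bijective (antipode k (A := H')))

lemma bialgHom_antipodeInv (φ : H →ₐc[k] H') (x : H) :
    φ (antipodeInv k H hS x) = antipodeInv k H' hS' (φ x) := by
  apply hS'.injective
  have h := congr($(antipode_comp_bialgHom φ) (antipodeInv k H hS x))
  rw [LinearMap.comp_apply, LinearMap.comp_apply, antipode_antipodeInv] at h
  rw [antipode_antipodeInv]
  exact h

lemma bialgHom_comp_twist (φ : H →ₐc[k] H') {τ : H →ₗ[k] H} {τ' : H' →ₗ[k] H'}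
    (h : Function.Semiconj φ τ τ') :
    φ.toLinearMap ∘ₗ twist k H hS τ = twist k H' hS' τ' ∘ₗ φ.toLinearMap := by
  ext x
  change φ (antipodeInv k H hS (antipodeInv k H hS (τ x))) = _
  rw [bialgHom_antipodeInv hS hS', bialgHom_antipodeInv hS hS', h]
  rfl

end Twist

section Gamma

variable {k H : Type*} [CommRing k] [Ring H] [HopfAlgebra k H]

lemma gamma_succ (T : H →ₗ[k] H) (m : ℕ) :
    gamma k H T (m + 1) = (toConv (gamma k H T m) * toConv (T ^ m)).ofConv := rfl

lemma gamma_zero (T : H →ₗ[k] H) : gamma k H T 0 = convOne k H := rfl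

lemma toConv_convOne : toConv (convOne k H) = 1 := rfl

lemma convOne_comp_coalgHom (g : H →ₗc[k] H) : convOne k H ∘ₗ g.toLinearMap = convOne k H :=
  LinearMap.convOne_comp_coalgHom g

lemma toConv_gamma_add (T : H →ₗc[k] H) (m n : ℕ) :
    toConv (gamma k H T.toLinearMap (m + n)) =
      toConv (gamma k H T.toLinearMap m) *
        toConv (gamma k H T.toLinearMap n ∘ₗ (T ^ m).toLinearMap) := by
  induction n with
  | zero => rw [Nat.add_zero, gamma_zero, convOne_comp_coalgHom, toConv_convOne, mul_one]
  | succ n ih =>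
    rw [← Nat.add_assoc, gamma_succ, toConv_ofConv, ih, mul_assoc, gamma_succ,
      LinearMap.convMul_comp_coalgHom_distrib, toConv_ofConv, CoalgHom.toLinearMap_pow,
      Nat.add_comm m n, pow_add, Module.End.mul_eq_comp]

lemma gamma_add_eq_convOne_iff (T : H →ₗc[k] H) (hT : Function.Surjective T) {a : ℕ}
    (ha : gamma k H T.toLinearMap a = convOne k H) (b : ℕ) :
    gamma k H T.toLinearMap (a + b) = convOne k H ↔ gamma k H T.toLinearMap b = convOne k H := by
  have hsurj : Function.Surjective (T ^ a).toLinearMap := by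
    rw [CoalgHom.toLinearMap_pow, Module.End.coe_pow]
    exact hT.iterate a
  have hadd := toConv_gamma_add T a b
  rw [ha, toConv_convOne, one_mul, toConv_injective.eq_iff] at hadd
  rw [hadd]
  conv_lhs => rw [← convOne_comp_coalgHom (T ^ a)]
  exact LinearMap.cancel_right hsurj

variable {H' : Type*} [Ring H'] [HopfAlgebra k H']

lemma bialgHom_comp_gamma (φ : H →ₐc[k] H') {T : H →ₗ[k] H} {T' : H' →ₗ[k] H'}
    (hT : φ.toLinearMap ∘ₗ T = T' ∘ₗ φ.toLinearMap) (m : ℕ) :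
    φ.toLinearMap ∘ₗ gamma k H T m = gamma k H' T' m ∘ₗ φ.toLinearMap := by
  induction m with
  | zero =>
    exact (LinearMap.algHom_comp_convOne (φ : H →ₐ[k] H')).trans
      (LinearMap.convOne_comp_coalgHom (φ : H →ₗc[k] H')).symm
  | succ m ih =>
    rw [gamma_succ, gamma_succ]
    calc _ = (toConv (φ.toLinearMap ∘ₗ gamma k H T m) *
            toConv (φ.toLinearMap ∘ₗ (T ^ m))).ofConv :=
          LinearMap.algHom_comp_convMul_distrib (φ : H →ₐ[k] H') _ _
      _ = (toConv (gamma k H' T' m ∘ₗ φ.toLinearMap) *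
            toConv ((T' ^ m) ∘ₗ φ.toLinearMap)).ofConv := by
          rw [ih, Module.End.commute_pow_left_of_commute hT.symm m]
      _ = _ := (LinearMap.convMul_comp_coalgHom_distrib _ _ (φ : H →ₗc[k] H')).symm

lemma gamma_eq_convOne_of_surjective (φ : H →ₐc[k] H') (hφ : Function.Surjective φ)
    {T : H →ₗ[k] H} {T' : H' →ₗ[k] H'} (hT : φ.toLinearMap ∘ₗ T = T' ∘ₗ φ.toLinearMap) {m : ℕ}
    (hm : gamma k H T m = convOne k H) : gamma k H' T' m = convOne k H' := by
  refine (LinearMap.cancel_right hφ).1 ?_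
  rw [← bialgHom_comp_gamma φ hT m, hm]
  exact bialgHom_comp_gamma φ hT 0

end Gamma

end TwistedExponent

/-- Let `H`, `H'` be Hopf algebras over a field `k` with bijective antipodes,
`τ` a Hopf algebra automorphism of `H` of finite order `r`, and `φ : H → H'` a surjective
bialgebra (hence Hopf algebra) homomorphism with `τ(ker φ) = ker φ`, so that there is an induced
Hopf algebra automorphism `τ'` of `H'` with `τ'(φ(h)) = φ(τ(h))`; let `r'` be the order of `τ'`.
Then `exp_{τ'}(H')` divides `exp_τ(H)·(r/r')` whenever the latter is finite (the statement being
vacuous when `exp_τ(H) = ∞`, per the convention that every positive integer divides `∞`). -/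
theorem stmt9 {k H H' : Type*} [Field k] [Ring H] [HopfAlgebra k H] [Ring H']
    [HopfAlgebra k H']
    (hS : Function.Bijective (HopfAlgebra.antipode (R := k) (A := H)))
    (hS' : Function.Bijective (HopfAlgebra.antipode (R := k) (A := H')))
    (τ : H ≃ₐc[k] H) (r : ℕ) (hr : HasOrder H (⇑τ) r)
    (φ : H →ₐc[k] H') (hφ : Function.Surjective φ)
    (τ' : H' ≃ₐc[k] H') (hcomm : ∀ h : H, τ' (φ h) = φ (τ h))
    (r' : ℕ) (hr' : HasOrder H' (⇑τ') r')
    (e : ℕ)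
    (he : IsLeast {n : ℕ | 0 < n ∧
      gamma k H (twist k H hS (τ : H →ₗ[k] H)) (n * r) = convOne k H} e) :
    ∃ e' : ℕ, IsLeast {n : ℕ | 0 < n ∧
      gamma k H' (twist k H' hS' (τ' : H' →ₗ[k] H')) (n * r') = convOne k H'} e' ∧
      e' ∣ e * (r / r') := by
  have hsemi : Function.Semiconj φ τ τ' := fun h => (hcomm h).symm
  have hΓ := gamma_eq_convOne_of_surjective φ hφ (bialgHom_comp_twist hS hS' φ hsemi) he.1.2
  have hrr' : r' ∣ r := hr'.dvd_of_iterate_eq_id <| funext <| hφ.forall.2 fun x => by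
    rw [← hsemi.iterate_right r x, hr.2.1, id, id]
  have hT' : twist k H' hS' (τ' : H' →ₗ[k] H') =
      (twistEquiv hS' τ'.toCoalgEquiv).toCoalgHom.toLinearMap :=
    (toLinearMap_twistEquiv hS' _).symm
  refine Nat.exists_isLeast_dvd_of_add_iff (fun a b ha => ?_)
    (Nat.mul_pos he.1.1 (Nat.div_pos (Nat.le_of_dvd hr.1 hrr') hr'.1)) ?_
  · rw [hT'] at ha
    rw [hT', Nat.add_mul]
    exact gamma_add_eq_convOne_iff _ (twistEquiv hS' _).surjective ha _
  · rwa [mul_assoc, Nat.div_mul_cancel hrr']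
end
end
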